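/- arXiv:1604.04514 — 3 statements merged into one kernel-verified Lean document; each statement's English description precedes it below -/
import Mathlib

section
/- For all real x ≥ 0 and all α ∈ [0,1], (1 - e^{-x})^α ≥ 1 - e^{-x^α}. -/
lemma lemA_concave (a b : ℝ) (ha : 0 ≤ a) (hab : a ≤ b) :
    a * (1 - Real.exp (-b)) ≤ b * (1 - Real.exp (-a)) := by
  have h1 : 1 + -(b - a) ≤ Real.exp (-(b - a)) := by
    have := Real.add_one_le_exp (-(b - a)); linarith
  have h2 : a + 1 ≤ Real.exp a := by
    have := Real.add_one_le_exp a; linarith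
  have h3 : Real.exp (-b) = Real.exp (-a) * Real.exp (-(b - a)) := by
    rw [← Real.exp_add]; ring_nf
  have h4 : 0 < Real.exp (-a) := Real.exp_pos _
  have h5 : Real.exp (-a) * Real.exp a = 1 := by rw [← Real.exp_add]; simp
  nlinarith [mul_nonneg ha (sub_nonneg.2 hab), Real.exp_pos (-(b - a)),
    mul_le_mul_of_nonneg_left h1 (mul_nonneg ha h4.le),
    mul_le_mul_of_nonneg_left h2 (mul_nonneg (sub_nonneg.2 hab) h4.le)]

theorem one_sub_exp_rpow_ge (x : ℝ) (hx : 0 ≤ x) (α : ℝ) (hα : α ∈ Set.Icc (0:ℝ) 1) :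
    (1 - Real.exp (-x)) ^ α ≥ 1 - Real.exp (-(x ^ α)) := by
  obtain ⟨hα0, hα1⟩ := hα
  rcases eq_or_lt_of_le hα0 with hα0' | hα0'
  · simp [← hα0', Real.rpow_zero]
    positivity
  rcases eq_or_lt_of_le hx with hx0 | hx0
  · rw [← hx0, Real.zero_rpow hα0'.ne']
    simp [Real.zero_rpow hα0'.ne']
  have hex : Real.exp (-x) < 1 := by
    rw [Real.exp_lt_one_iff]; linarith
  have hbpos : 0 < 1 - Real.exp (-x) := by linarith
  have hb1 : 1 - Real.exp (-x) ≤ 1 := by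
    have := Real.exp_pos (-x); linarith
  rcases le_or_gt 1 x with h1x | h1x
  · have step1 : 1 - Real.exp (-x) ≤ (1 - Real.exp (-x)) ^ α := by
      calc 1 - Real.exp (-x) = (1 - Real.exp (-x)) ^ (1:ℝ) := (Real.rpow_one _).symm
        _ ≤ _ := Real.rpow_le_rpow_of_exponent_ge hbpos hb1 hα1
    have step2 : x ^ α ≤ x := by
      calc x ^ α ≤ x ^ (1:ℝ) := Real.rpow_le_rpow_of_exponent_le h1x hα1
        _ = x := Real.rpow_one x
    have step3 : Real.exp (-x) ≤ Real.exp (-(x ^ α)) := by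
      exact Real.exp_le_exp.2 (by linarith)
    linarith
  · have hxa : x ≤ x ^ α := by
      calc x = x ^ (1:ℝ) := (Real.rpow_one x).symm
        _ ≤ x ^ α := Real.rpow_le_rpow_of_exponent_ge hx0 h1x.le hα1
    have key := lemA_concave x (x ^ α) hx hxa
    have hxx : x * x ^ (α - 1) = x ^ α := by
      calc x * x ^ (α - 1) = x ^ (1:ℝ) * x ^ (α - 1) := by rw [Real.rpow_one]
        _ = x ^ (1 + (α - 1)) := (Real.rpow_add hx0 _ _).symm
        _ = x ^ α := by ring_nf
    have key' : x * (1 - Real.exp (-(x ^ α))) ≤ x * (x ^ (α - 1) * (1 - Real.exp (-x))) := by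
      rw [← mul_assoc, hxx]; exact key
    have hA : 1 - Real.exp (-(x ^ α)) ≤ x ^ (α - 1) * (1 - Real.exp (-x)) :=
      le_of_mul_le_mul_left key' hx0
    have hle : 1 - Real.exp (-x) ≤ x := by
      have := Real.add_one_le_exp (-x); linarith
    have h6 : x ^ (α - 1) ≤ (1 - Real.exp (-x)) ^ (α - 1) :=
      Real.rpow_le_rpow_of_nonpos hbpos hle (by linarith)
    have h7 : x ^ (α - 1) * (1 - Real.exp (-x)) ≤
        (1 - Real.exp (-x)) ^ (α - 1) * (1 - Real.exp (-x)) :=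
      mul_le_mul_of_nonneg_right h6 hbpos.le
    have h8 : (1 - Real.exp (-x)) ^ (α - 1) * (1 - Real.exp (-x)) = (1 - Real.exp (-x)) ^ α := by
      rw [← Real.rpow_add_one hbpos.ne']
      norm_num
    linarith
end

section
/- For all positive integers i ≤ j and all real t ≥ 0, (-1)^{i+j} (i!/j!) Σ_{k=i}^{j} S(k,i) e^{-tk} s(j,k) = (-1)^j Σ_{k=1}^{i} (-1)^k C(i,k) · binom(e^{-t}·k, j), where binom(x, j) := x(x-1)⋯(x-j+1)/j! is the generalized binomial coefficient. -/
/-- Signed Stirling numbers of the first kind. -/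
def stirlingFirst : ℕ → ℕ → ℤ
  | 0, 0 => 1
  | 0, _ + 1 => 0
  | _ + 1, 0 => 0
  | n + 1, k + 1 => stirlingFirst n k - n * stirlingFirst n (k + 1)

/-- Stirling numbers of the second kind. -/
def stirlingSecond : ℕ → ℕ → ℕ
  | 0, 0 => 1
  | 0, _ + 1 => 0
  | _ + 1, 0 => 0
  | n + 1, k + 1 => (k + 1) * stirlingSecond n (k + 1) + stirlingSecond n k

lemma sf_zero_of_lt : ∀ {j n : ℕ}, j < n → stirlingFirst j n = 0 := by
  intro j
  induction j with
  | zero => intro n hn; match n, hn with | m+1, _ => rfl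
  | succ j ih =>
    intro n hn
    match n, hn with
    | m+1, hn =>
      have h1 : j < m := by omega
      have h2 : j < m+1 := by omega
      show stirlingFirst j m - j * stirlingFirst j (m+1) = 0
      rw [ih h1, ih h2]; ring

lemma ss_zero_of_lt : ∀ {n i : ℕ}, n < i → stirlingSecond n i = 0 := by
  intro n
  induction n with
  | zero => intro i hi; match i, hi with | m+1, _ => rfl
  | succ n ih =>
    intro i hi
    match i, hi with
    | m+1, hi =>
      have h1 : n < m+1 := by omega
      have h2 : n < m := by omega
      show (m+1) * stirlingSecond n (m+1) + stirlingSecond n m = 0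
      rw [ih h1, ih h2]; ring

lemma sf_zero_left (j : ℕ) (hj : 1 ≤ j) : stirlingFirst j 0 = 0 := by
  match j, hj with | m+1, _ => rfl

lemma prod_eq_sum_sf (j : ℕ) (y : ℝ) :
    ∏ m ∈ Finset.range j, (y - m) = ∑ n ∈ Finset.range (j+1), (stirlingFirst j n : ℝ) * y^n := by
  induction j with
  | zero => simp [stirlingFirst]
  | succ j ih =>
    set g : ℕ → ℝ := fun n => (stirlingFirst j n : ℝ) * y^n with hg
    set P : ℝ := ∑ n ∈ Finset.range (j+1), g n with hP
    have hz : (j : ℝ) * (stirlingFirst j 0 : ℝ) = 0 := by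
      rcases Nat.eq_zero_or_pos j with h | h
      · subst h; simp
      · rw [sf_zero_left j h]; simp
    have e1 : ∑ n ∈ Finset.range (j+2), g n = (∑ n ∈ Finset.range (j+1), g (n+1)) + g 0 :=
      Finset.sum_range_succ' g (j+1)
    have e2 : ∑ n ∈ Finset.range (j+2), g n = P := by
      rw [Finset.sum_range_succ]
      have : stirlingFirst j (j+1) = 0 := sf_zero_of_lt (by omega)
      simp [hg, this, hP]
    have shift : ∑ n ∈ Finset.range (j+1), g (n+1) = P - g 0 := by
      have h := e1.symm.trans e2; linarith
    have hrec : ∀ n : ℕ, (stirlingFirst (j+1) (n+1) : ℝ)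
        = (stirlingFirst j n : ℝ) - j * (stirlingFirst j (n+1) : ℝ) := by
      intro n
      show ((stirlingFirst j n - j * stirlingFirst j (n+1) : ℤ) : ℝ) = _
      push_cast; ring
    rw [Finset.prod_range_succ, ih, Finset.sum_range_succ' _ (j+1)]
    have h0 : stirlingFirst (j+1) 0 = 0 := rfl
    simp only [hrec, h0, Int.cast_zero, zero_mul, add_zero, sub_mul, pow_zero, mul_one]
    rw [Finset.sum_sub_distrib]
    have t1 : ∑ n ∈ Finset.range (j+1), (stirlingFirst j n : ℝ) * y^(n+1) = P * y := by
      rw [hP, Finset.sum_mul]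
      exact Finset.sum_congr rfl (fun n _ => by rw [hg]; ring)
    have t2 : ∑ n ∈ Finset.range (j+1), (↑j * (stirlingFirst j (n+1) : ℝ)) * y^(n+1)
        = ↑j * (P - g 0) := by
      rw [← shift, Finset.mul_sum]
      exact Finset.sum_congr rfl (fun n _ => by rw [hg]; ring)
    rw [t1, t2]
    have : g 0 = (stirlingFirst j 0 : ℝ) := by simp [hg]
    rw [this]
    nlinarith [hz]

noncomputable def Tsum (n i : ℕ) : ℝ :=
  ∑ k ∈ Finset.range (i+1), (-1:ℝ)^k * (i.choose k : ℝ) * (k:ℝ)^n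

lemma Tsum_rec (n i : ℕ) : Tsum (n+1) (i+1) = (i+1) * (Tsum n (i+1) - Tsum n i) := by
  have hA : Tsum n (i+1) = (∑ l ∈ Finset.range (i+1),
      (-1:ℝ)^(l+1) * ((i+1).choose (l+1) : ℝ) * ((l+1:ℕ):ℝ)^n) + (0:ℝ)^n := by
    rw [Tsum, Finset.sum_range_succ' _ (i+1)]
    simp
  have hB : Tsum n i = (∑ l ∈ Finset.range (i+1),
      (-1:ℝ)^(l+1) * (i.choose (l+1) : ℝ) * ((l+1:ℕ):ℝ)^n) + (0:ℝ)^n := by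
    rw [Tsum, Finset.sum_range_succ' _ i]
    rw [Finset.sum_range_succ]
    simp [Nat.choose_succ_self]
  have key : Tsum (n+1) (i+1) = ∑ l ∈ Finset.range (i+1),
      (-(i+1:ℝ)) * ((-1:ℝ)^l * (i.choose l : ℝ) * ((l+1:ℕ):ℝ)^n) := by
    rw [Tsum, Finset.sum_range_succ' _ (i+1)]
    have h0 : ((-1:ℝ)^0 * ((i+1).choose 0 : ℝ) * ((0:ℕ):ℝ)^(n+1)) = 0 := by
      simp
    rw [h0, add_zero]
    refine Finset.sum_congr rfl (fun l _ => ?_)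
    have hc : ((i+1) * i.choose l : ℕ) = ((i+1).choose (l+1) * (l+1) : ℕ) :=
      Nat.add_one_mul_choose_eq i l
    have hc' : ((i:ℝ)+1) * (i.choose l : ℝ) = ((i+1).choose (l+1) : ℝ) * ((l:ℝ)+1) := by
      exact_mod_cast congrArg (Nat.cast : ℕ → ℝ) hc
    push_cast
    linear_combination ((-1:ℝ)^l * ((l:ℝ)+1)^n) * hc'
  have hV : ∑ l ∈ Finset.range (i+1), ((-1:ℝ)^l * (i.choose l : ℝ) * ((l+1:ℕ):ℝ)^n)
      = Tsum n i - Tsum n (i+1) := by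
    rw [hA, hB]
    rw [add_sub_add_right_eq_sub, ← Finset.sum_sub_distrib]
    refine Finset.sum_congr rfl (fun l _ => ?_)
    have pascal : ((i+1).choose (l+1) : ℝ) = (i.choose l : ℝ) + (i.choose (l+1) : ℝ) := by
      exact_mod_cast congrArg (Nat.cast : ℕ → ℝ) (Nat.choose_succ_succ i l)
    push_cast
    linear_combination (-(-1:ℝ)^l * ((l:ℝ)+1)^n) * pascal
  rw [key, ← Finset.mul_sum, hV]
  ring

lemma fact_ss : ∀ (n i : ℕ),
    (i.factorial : ℝ) * (stirlingSecond n i : ℝ) = (-1:ℝ)^i * Tsum n i := by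
  intro n
  induction n with
  | zero =>
    intro i
    match i with
    | 0 => simp [Tsum, stirlingSecond]
    | i+1 =>
      have hz : stirlingSecond 0 (i+1) = 0 := rfl
      have halt : (∑ k ∈ Finset.range (i+2), (-1:ℤ)^k * ((i+1).choose k : ℤ)) = 0 :=
        Int.alternating_sum_range_choose_of_ne (by omega)
      have : Tsum 0 (i+1) = 0 := by
        rw [Tsum]
        have := congrArg (Int.cast : ℤ → ℝ) halt
        push_cast at this
        simpa using this
      rw [hz, this]; simp
  | succ n ih =>
    intro i
    match i with
    | 0 =>
      have hz : stirlingSecond (n+1) 0 = 0 := rfl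
      have : Tsum (n+1) 0 = 0 := by simp [Tsum]
      rw [hz, this]; simp
    | i+1 =>
      have hS : (stirlingSecond (n+1) (i+1) : ℝ)
          = ((i:ℝ)+1) * (stirlingSecond n (i+1) : ℝ) + (stirlingSecond n i : ℝ) := by
        show (((i+1) * stirlingSecond n (i+1) + stirlingSecond n i : ℕ) : ℝ) = _
        push_cast; ring
      have h1 := ih (i+1)
      have h2 := ih i
      have hf : ((i+1).factorial : ℝ) = ((i:ℝ)+1) * (i.factorial : ℝ) := by
        rw [Nat.factorial_succ]; push_cast; ring
      rw [hf] at h1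
      rw [hS, hf, Tsum_rec]
      linear_combination ((i:ℝ)+1) * h1 + ((i:ℝ)+1) * h2

/-- Generalized binomial coefficient `binom(x, j) = x(x-1)⋯(x-j+1)/j!` for real `x`. -/
noncomputable def genBinom (x : ℝ) (j : ℕ) : ℝ :=
  (∏ m ∈ Finset.range j, (x - (m : ℝ))) / (j.factorial : ℝ)

theorem stirling_sum_eq_binom_sum (i j : ℕ) (hi : 1 ≤ i) (hij : i ≤ j) (t : ℝ) (ht : 0 ≤ t) :
    (-1 : ℝ) ^ (i + j) * ((i.factorial : ℝ) / (j.factorial : ℝ)) *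
        ∑ k ∈ Finset.Icc i j,
          (stirlingSecond k i : ℝ) * Real.exp (-t * k) * (stirlingFirst j k : ℝ) =
      (-1 : ℝ) ^ j * ∑ k ∈ Finset.Icc 1 i,
        (-1 : ℝ) ^ k * (i.choose k : ℝ) * genBinom (Real.exp (-t) * k) j := by
  set x : ℝ := Real.exp (-t) with hx
  have hexp : ∀ k : ℕ, Real.exp (-t * k) = x ^ k := by
    intro k
    rw [hx, ← Real.exp_nat_mul]
    ring_nf
  have hj1 : 1 ≤ j := le_trans hi hij
  -- inner alternating sum equals Tsum for positive exponent
  have hIcc : ∀ n : ℕ, 1 ≤ n →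
      ∑ k ∈ Finset.Icc 1 i, (-1:ℝ)^k * (i.choose k : ℝ) * (k:ℝ)^n = Tsum n i := by
    intro n hn
    rw [Tsum]
    apply Finset.sum_subset
    · intro k hk
      rw [Finset.mem_Icc] at hk
      rw [Finset.mem_range]; omega
    · intro k hk hk2
      rw [Finset.mem_range] at hk
      rw [Finset.mem_Icc] at hk2
      have : k = 0 := by omega
      subst this
      rw [show ((0:ℕ):ℝ) = 0 by norm_num, zero_pow (by omega)]
      ring
  have hsq : (-1:ℝ)^i * (-1:ℝ)^i = 1 := by
    rw [← pow_add]
    exact Even.neg_one_pow ⟨i, rfl⟩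
  -- rewrite RHS
  have main : ∑ k ∈ Finset.Icc 1 i, (-1:ℝ)^k * (i.choose k : ℝ) * genBinom (x * k) j
      = (1/(j.factorial:ℝ)) * ∑ n ∈ Finset.range (j+1),
          (stirlingFirst j n : ℝ) * x^n * ((-1:ℝ)^i * (i.factorial:ℝ) * (stirlingSecond n i : ℝ)) := by
    have step1 : ∀ k : ℕ, (-1:ℝ)^k * (i.choose k : ℝ) * genBinom (x * k) j
        = ∑ n ∈ Finset.range (j+1), (1/(j.factorial:ℝ)) *
            ((stirlingFirst j n : ℝ) * x^n * ((-1:ℝ)^k * (i.choose k : ℝ) * (k:ℝ)^n)) := by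
      intro k
      rw [genBinom, prod_eq_sum_sf, Finset.sum_div, Finset.mul_sum]
      refine Finset.sum_congr rfl (fun n _ => ?_)
      rw [mul_pow]
      ring
    have hT' : ∀ n : ℕ, Tsum n i
        = (-1:ℝ)^i * (i.factorial:ℝ) * (stirlingSecond n i : ℝ) := by
      intro n
      have hT := fact_ss n i
      linear_combination (-(-1:ℝ)^i) * hT - (Tsum n i) * hsq
    simp only [step1]
    rw [Finset.sum_comm, Finset.mul_sum]
    refine Finset.sum_congr rfl (fun n hn => ?_)
    rw [← Finset.mul_sum, ← Finset.mul_sum]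
    rcases Nat.eq_zero_or_pos n with h0 | hpos
    · subst h0
      rw [sf_zero_left j hj1]
      simp
    · rw [hIcc n hpos, hT' n]
  rw [main]
  -- convert LHS index set
  have hsub : ∑ k ∈ Finset.Icc i j, (stirlingSecond k i : ℝ) * Real.exp (-t * k) * (stirlingFirst j k : ℝ)
      = ∑ n ∈ Finset.range (j+1), (stirlingSecond n i : ℝ) * x^n * (stirlingFirst j n : ℝ) := by
    simp only [hexp]
    apply Finset.sum_subset
    · intro k hk
      rw [Finset.mem_Icc] at hk
      rw [Finset.mem_range]; omega
    · intro k hk hk2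
      rw [Finset.mem_range] at hk
      rw [Finset.mem_Icc] at hk2
      have : k < i := by omega
      rw [ss_zero_of_lt this]
      simp
  rw [hsub, Finset.mul_sum, Finset.mul_sum, Finset.mul_sum]
  refine Finset.sum_congr rfl (fun n hn => ?_)
  ring
end

section
/- For all positive integers 1 ≤ i < j, define h(i,j) := Σ_{k=1}^{j-i} P(η₁+⋯+η_k = j-i) where η₁, η₂, ... are i.i.d. with P(η₁ = n) = 1/(n(n+1)) for n ≥ 1. Then for |z| < 1 and fixed i, Σ_{j=i}^∞ h(i,j) z^{j-1} = z^i / ((1-z)(-log(1-z))), where h(i,i) := 1. -/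
/-!
With `F(z) = ∑ etaDist n zⁿ`, the identity `1/(n(n+1)) = 1/n - 1/(n+1)` and the series of
`-log(1 - z)` give `1 - F(z) = (1 - z)(-log(1 - z))/z`. By the Cauchy product `convPow k` has
generating function `F(z)ᵏ`. As `convPow k m = 0` for `k > m`, `hittingProb i (i + m)` is the
full sum `∑ₖ convPow k m`, and since all terms are nonnegative the two summations can be swapped:
`∑ₘ hittingProb i (i + m) zᵐ = ∑ₖ F(z)ᵏ = 1/(1 - F(z))`.
-/

/-- Distribution of `η₁`: `P(η₁ = n) = 1/(n(n+1))` for `n ≥ 1`, and `0` for `n = 0`. -/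
noncomputable def etaDist (n : ℕ) : ℝ :=
  if n = 0 then 0 else 1 / ((n : ℝ) * (n + 1))

/-- `convPow k m = P(η₁ + ⋯ + η_k = m)` for i.i.d. `η`'s with distribution `etaDist`. -/
noncomputable def convPow : ℕ → ℕ → ℝ
  | 0, m => if m = 0 then 1 else 0
  | k + 1, m => ∑ n ∈ Finset.Icc 1 m, etaDist n * convPow k (m - n)

/-- The hitting probabilities `h(i,j) = Σ_{k=1}^{j-i} P(η₁+⋯+η_k = j-i)`, with `h(i,i) = 1`. -/
noncomputable def hittingProb (i j : ℕ) : ℝ :=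
  if j = i then 1 else ∑ k ∈ Finset.Icc 1 (j - i), convPow k (j - i)

open Finset Real

lemma etaDist_nonneg (n : ℕ) : 0 ≤ etaDist n := by
  unfold etaDist; split_ifs <;> positivity

lemma etaDist_succ (n : ℕ) : etaDist (n + 1) = 1 / ((n : ℝ) + 1) - 1 / ((n : ℝ) + 1 + 1) := by
  simp only [etaDist, Nat.succ_ne_zero, if_false]
  push_cast
  field_simp
  ring

lemma convPow_zero_left (m : ℕ) : convPow 0 m = if m = 0 then 1 else 0 := rfl

lemma convPow_nonneg (k m : ℕ) : 0 ≤ convPow k m := by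
  induction k generalizing m with
  | zero => rw [convPow_zero_left]; split_ifs <;> norm_num
  | succ k ih => exact sum_nonneg fun n _ => mul_nonneg (etaDist_nonneg n) (ih _)

lemma convPow_eq_zero_of_lt {k m : ℕ} (h : m < k) : convPow k m = 0 := by
  induction k generalizing m with
  | zero => omega
  | succ k ih =>
    refine sum_eq_zero fun n hn => ?_
    rw [mem_Icc] at hn
    rw [ih (by omega), mul_zero]

lemma convPow_succ_eq_sum_range (k m : ℕ) :
    convPow (k + 1) m = ∑ n ∈ range (m + 1), etaDist n * convPow k (m - n) := by
  rw [range_eq_Ico, sum_eq_sum_Ico_succ_bot (Nat.succ_pos m), zero_add,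
    Nat.succ_eq_add_one, Ico_add_one_right_eq_Icc]
  simp [etaDist, convPow]

lemma hittingProb_add (i m : ℕ) : hittingProb i (i + m) = ∑ k ∈ range (m + 1), convPow k m := by
  rw [range_eq_Ico, sum_eq_sum_Ico_succ_bot (Nat.succ_pos m), zero_add,
    Nat.succ_eq_add_one, Ico_add_one_right_eq_Icc, convPow_zero_left]
  rcases Nat.eq_zero_or_pos m with rfl | hm
  · simp [hittingProb]
  · rw [hittingProb, if_neg (by omega), Nat.add_sub_cancel_left, if_neg hm.ne', zero_add]

lemma hasSum_etaDist_mul_pow {z : ℝ} (hz : |z| < 1) (hz0 : z ≠ 0) :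
    HasSum (fun n => etaDist n * z ^ n) (1 - (1 - z) * -log (1 - z) / z) := by
  have hL : HasSum (fun n : ℕ => z ^ (n + 1) / (n + 1)) (-log (1 - z)) :=
    hasSum_pow_div_log_of_abs_lt_one hz
  have hL' : HasSum (fun n : ℕ => z ^ (n + 1 + 1) / (n + 1 + 1)) (-log (1 - z) - z) := by
    simpa using (hasSum_nat_add_iff' 1).2 hL
  refine (hasSum_nat_add_iff' 1).1 ?_
  convert hL.sub (hL'.div_const z) using 1
  · ext n
    rw [etaDist_succ]
    field_simp
    ring
  · simp only [range_one, sum_singleton, etaDist, if_pos, zero_mul, sub_zero]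
    field_simp
    ring

lemma hasSum_convPow_mul_pow {x F : ℝ} (hF : HasSum (fun n => etaDist n * x ^ n) F) (k : ℕ) :
    HasSum (fun m => convPow k m * x ^ m) (F ^ k) := by
  induction k with
  | zero =>
    simpa [convPow_zero_left] using hasSum_single (f := fun m => convPow 0 m * x ^ m) 0
      fun m hm => by simp [convPow_zero_left, hm]
  | succ k ih =>
    have hprod := hasSum_sum_range_mul_of_summable_norm (f := fun n => etaDist n * x ^ n)
      (g := fun m => convPow k m * x ^ m) hF.summable.abs ih.summable.abs
    rw [hF.tsum_eq, ih.tsum_eq, ← pow_succ'] at hprod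
    have hterm (m : ℕ) : convPow (k + 1) m * x ^ m =
        ∑ n ∈ range (m + 1), etaDist n * x ^ n * (convPow k (m - n) * x ^ (m - n)) := by
      rw [convPow_succ_eq_sum_range, sum_mul]
      refine sum_congr rfl fun n hn => ?_
      rw [← pow_mul_pow_sub x (Nat.lt_succ_iff.1 (mem_range.1 hn))]
      ring
    simp_rw [hterm]
    exact hprod

lemma hasSum_sum_convPow_mul_pow {x F : ℝ} (hx : 0 ≤ x)
    (hF : HasSum (fun n => etaDist n * x ^ n) F) (hF1 : F < 1) :
    HasSum (fun m => (∑ k ∈ range (m + 1), convPow k m) * x ^ m) (1 - F)⁻¹ := by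
  set f : ℕ × ℕ → ℝ := fun p => convPow p.1 p.2 * x ^ p.2
  have hk := hasSum_convPow_mul_pow hF
  have hF0 : 0 ≤ F := hF.nonneg fun n => mul_nonneg (etaDist_nonneg n) (pow_nonneg hx n)
  have hf : Summable f := by
    refine (summable_prod_of_nonneg fun p => mul_nonneg (convPow_nonneg _ _) (pow_nonneg hx _)).2
      ⟨fun k => (hk k).summable, ?_⟩
    simpa only [f, (hk _).tsum_eq] using summable_geometric_of_lt_one hF0 hF1
  -- sum the double series `f (k, m)` along `k`-fibres, then read it again along `m`-fibres
  have htotal : ∑' p, f p = (1 - F)⁻¹ :=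
    (hf.hasSum.prod_fiberwise hk).unique (hasSum_geometric_of_lt_one hF0 hF1)
  rw [← htotal]
  refine ((Equiv.prodComm ℕ ℕ).hasSum_iff.2 hf.hasSum).prod_fiberwise fun m => ?_
  rw [sum_mul]
  exact hasSum_sum_of_ne_finset_zero fun k hk =>
    by simp [f, convPow_eq_zero_of_lt (not_lt.1 (mt mem_range.2 hk))]

lemma hasSum_hittingProb_mul_pow (i : ℕ) {z : ℝ} (hz : z ∈ Set.Ioo (0 : ℝ) 1) :
    HasSum (fun m => hittingProb i (i + m) * z ^ m) (z / ((1 - z) * -log (1 - z))) := by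
  obtain ⟨hz0, hz1⟩ := hz
  have h1z : 0 < 1 - z := by linarith
  have hL : 0 < -log (1 - z) := neg_pos.2 (log_neg h1z (by linarith))
  have hF := hasSum_etaDist_mul_pow (abs_lt.2 ⟨by linarith, hz1⟩) hz0.ne'
  have h1F : 0 < (1 - z) * -log (1 - z) / z := by positivity
  convert hasSum_sum_convPow_mul_pow hz0.le hF (by linarith) using 1
  · simp only [hittingProb_add]
  · rw [sub_sub_cancel, inv_div]

theorem hittingProb_generating_function (i : ℕ) (hi : 1 ≤ i) (z : ℝ) (hz : z ∈ Set.Ioo (0:ℝ) 1) :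
    ∑' m : ℕ, hittingProb i (i + m) * z ^ (i + m - 1) =
      z ^ i / ((1 - z) * (-Real.log (1 - z))) := by
  calc ∑' m : ℕ, hittingProb i (i + m) * z ^ (i + m - 1)
      = ∑' m : ℕ, hittingProb i (i + m) * z ^ m * z ^ (i - 1) :=
        tsum_congr fun m => by rw [mul_assoc, ← pow_add]; congr 2; omega
    _ = z / ((1 - z) * -log (1 - z)) * z ^ (i - 1) :=
        ((hasSum_hittingProb_mul_pow i hz).mul_right _).tsum_eq
    _ = z ^ i / ((1 - z) * -log (1 - z)) := by
        rw [← pow_sub_one_mul (by omega : i ≠ 0) z]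
        ring
end
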